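/- Suppose θ : ℝ² → ℝ is C² and satisfies Hess θ(V₁,V₁) = 0 with V₁ = (cos θ, sin θ). Along any integral curve α of V₁ (α' = V₁ ∘ α), the function f(s) = θ(α(s)) satisfies the second order ODE f''(s) = g(s)·f'(s), where g(s) = (∇_{V₂}θ)(α(s)) and V₂ = (−sin θ, cos θ). Consequently f' has constant sign: either f' ≡ 0, f' > 0 everywhere, or f' < 0 everywhere on the interval of definition. -/

import Mathlib

/-! Along the curve, `(V₁ ∘ α)' = f' · (V₂ ∘ α)`, so differentiating `f' = dθ(V₁) ∘ α` gives
`f'' = Hess θ(V₁, V₁) + f' · dθ(V₂)`, which the PDE reduces to the linear ODE `f'' = g f'`.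
Its solutions are `f' = c · exp (∫ g)`, so `f'` has the sign of `c` throughout. -/

open Set

section LinearODE

variable {s : Set ℝ}

theorem ContinuousOn.exists_hasDerivAt_of_isPreconnected {E : Type*} [NormedAddCommGroup E]
    [NormedSpace ℝ E] [CompleteSpace E] {g : ℝ → E} (hs : IsOpen s) (hs' : IsPreconnected s)
    (hg : ContinuousOn g s) : ∃ G : ℝ → E, ∀ x ∈ s, HasDerivAt G (g x) x := by
  rcases s.eq_empty_or_nonempty with rfl | ⟨x₀, hx₀⟩
  · exact ⟨0, by simp⟩
  refine ⟨fun x => ∫ t in x₀..x, g t, fun x hx => ?_⟩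
  exact intervalIntegral.integral_hasDerivAt_right
    (hg.mono (hs'.ordConnected.uIcc_subset hx₀ hx)).intervalIntegrable
    (hg.stronglyMeasurableAtFilter hs x hx) (hg.continuousAt (hs.mem_nhds hx))

theorem exists_eq_mul_exp_of_hasDerivAt_mul {y g G : ℝ → ℝ} (hs : IsOpen s)
    (hs' : IsPreconnected s) (hG : ∀ x ∈ s, HasDerivAt G (g x) x)
    (hy : ∀ x ∈ s, HasDerivAt y (g x * y x) x) :
    ∃ c, ∀ x ∈ s, y x = c * Real.exp (G x) := by
  have hderiv : ∀ x ∈ s, HasDerivAt (fun x => y x * Real.exp (-G x)) 0 x := fun x hx => by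
    refine ((hy x hx).fun_mul (hG x hx).fun_neg.exp).congr_deriv ?_
    ring
  obtain ⟨c, hc⟩ := hs.exists_is_const_of_deriv_eq_zero hs'
    (fun x hx => (hderiv x hx).differentiableAt.differentiableWithinAt)
    (fun x hx => (hderiv x hx).deriv)
  refine ⟨c, fun x hx => ?_⟩
  rw [← hc x hx, mul_assoc, ← Real.exp_add, neg_add_cancel, Real.exp_zero, mul_one]

theorem forall_eq_zero_or_pos_or_neg_of_hasDerivAt_mul {y g : ℝ → ℝ} (hs : IsOpen s)
    (hs' : IsPreconnected s) (hg : ContinuousOn g s)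
    (hy : ∀ x ∈ s, HasDerivAt y (g x * y x) x) :
    (∀ x ∈ s, y x = 0) ∨ (∀ x ∈ s, 0 < y x) ∨ (∀ x ∈ s, y x < 0) := by
  obtain ⟨G, hG⟩ := hg.exists_hasDerivAt_of_isPreconnected hs hs'
  obtain ⟨c, hc⟩ := exists_eq_mul_exp_of_hasDerivAt_mul hs hs' hG hy
  rcases lt_trichotomy c 0 with hneg | rfl | hpos
  · exact Or.inr <| Or.inr fun x hx => hc x hx ▸ mul_neg_of_neg_of_pos hneg (Real.exp_pos _)
  · exact Or.inl fun x hx => by rw [hc x hx, zero_mul]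
  · exact Or.inr <| Or.inl fun x hx => hc x hx ▸ mul_pos hpos (Real.exp_pos _)

end LinearODE

theorem HasDerivAt.cos_sin {f : ℝ → ℝ} {f' x : ℝ} (hf : HasDerivAt f f' x) :
    HasDerivAt (fun u => (Real.cos (f u), Real.sin (f u)))
      (f' • (-Real.sin (f x), Real.cos (f x))) x := by
  convert hf.cos.prodMk hf.sin using 1
  simp only [Prod.smul_mk, smul_eq_mul, Prod.mk.injEq]
  constructor <;> ring

section IntegralCurve

variable {θ : ℝ × ℝ → ℝ} {α : ℝ → ℝ × ℝ}

theorem hasDerivAt_fderiv_apply_cos_sin {s : ℝ} (hθ : ContDiffAt ℝ 2 θ (α s))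
    (hhess : fderiv ℝ (fderiv ℝ θ) (α s) (Real.cos (θ (α s)), Real.sin (θ (α s)))
      (Real.cos (θ (α s)), Real.sin (θ (α s))) = 0)
    (hα : HasDerivAt α (Real.cos (θ (α s)), Real.sin (θ (α s))) s) :
    HasDerivAt (fun u => fderiv ℝ θ (α u) (Real.cos (θ (α u)), Real.sin (θ (α u))))
      (fderiv ℝ θ (α s) (-Real.sin (θ (α s)), Real.cos (θ (α s)))
        * fderiv ℝ θ (α s) (Real.cos (θ (α s)), Real.sin (θ (α s)))) s := by
  have hdθ : HasDerivAt (fun u => fderiv ℝ θ (α u))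
      (fderiv ℝ (fderiv ℝ θ) (α s) (Real.cos (θ (α s)), Real.sin (θ (α s)))) s :=
    ((hθ.fderiv_right le_rfl).differentiableAt one_ne_zero).hasFDerivAt.comp_hasDerivAt s hα
  have hf : HasDerivAt (fun u => θ (α u))
      (fderiv ℝ θ (α s) (Real.cos (θ (α s)), Real.sin (θ (α s)))) s :=
    (hθ.differentiableAt two_ne_zero).hasFDerivAt.comp_hasDerivAt s hα
  refine (hdθ.clm_apply hf.cos_sin).congr_deriv ?_
  rw [hhess, zero_add, map_smul, smul_eq_mul, mul_comm]

theorem hasDerivAt_deriv_comp_of_hasDerivAt_eq_cos_sin {U : Set ℝ} (hθ : ContDiff ℝ 2 θ)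
    (hpde : ∀ p : ℝ × ℝ, fderiv ℝ (fderiv ℝ θ) p (Real.cos (θ p), Real.sin (θ p))
      (Real.cos (θ p), Real.sin (θ p)) = 0)
    (hU : IsOpen U)
    (hα : ∀ s ∈ U, HasDerivAt α (Real.cos (θ (α s)), Real.sin (θ (α s))) s) :
    ∀ s ∈ U, HasDerivAt (fun u => deriv (fun v => θ (α v)) u)
      (fderiv ℝ θ (α s) (-Real.sin (θ (α s)), Real.cos (θ (α s)))
        * deriv (fun v => θ (α v)) s) s := by
  have hderiv : ∀ s ∈ U, deriv (fun v => θ (α v)) s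
      = fderiv ℝ θ (α s) (Real.cos (θ (α s)), Real.sin (θ (α s))) := fun s hs =>
    ((hθ.differentiable two_ne_zero (α s)).hasFDerivAt.comp_hasDerivAt s (hα s hs)).deriv
  intro s hs
  rw [hderiv s hs]
  exact (hasDerivAt_fderiv_apply_cos_sin hθ.contDiffAt (hpde (α s)) (hα s hs))
    |>.congr_of_eventuallyEq (Filter.eventuallyEq_of_mem (hU.mem_nhds hs) hderiv)

end IntegralCurve

/-- If `θ` is C² and satisfies `Hess θ(V₁,V₁) = 0` with `V₁ = (cos θ, sin θ)`,
then along any integral curve `α` of `V₁` the function `f = θ ∘ α` satisfies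
`f'' = g · f'` with `g = (∇_{V₂}θ) ∘ α`, `V₂ = (−sin θ, cos θ)`; consequently
`f'` has constant sign: `f' ≡ 0`, `f' > 0` everywhere, or `f' < 0` everywhere. -/
theorem angle_derivative_constant_sign (θ : ℝ × ℝ → ℝ) (hθ : ContDiff ℝ 2 θ)
    (hpde : ∀ p : ℝ × ℝ,
      fderiv ℝ (fderiv ℝ θ) p (Real.cos (θ p), Real.sin (θ p))
        (Real.cos (θ p), Real.sin (θ p)) = 0)
    (a b : ℝ) (α : ℝ → ℝ × ℝ)
    (hα : ∀ s ∈ Set.Ioo a b,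
      HasDerivAt α (Real.cos (θ (α s)), Real.sin (θ (α s))) s) :
    (∀ s ∈ Set.Ioo a b,
      HasDerivAt (fun u => deriv (fun v => θ (α v)) u)
        (fderiv ℝ θ (α s) (-Real.sin (θ (α s)), Real.cos (θ (α s)))
          * deriv (fun v => θ (α v)) s) s)
    ∧ ((∀ s ∈ Set.Ioo a b, deriv (fun v => θ (α v)) s = 0)
      ∨ (∀ s ∈ Set.Ioo a b, 0 < deriv (fun v => θ (α v)) s)
      ∨ (∀ s ∈ Set.Ioo a b, deriv (fun v => θ (α v)) s < 0)) := by
  have hode := hasDerivAt_deriv_comp_of_hasDerivAt_eq_cos_sin hθ hpde isOpen_Ioo hα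
  refine ⟨hode, forall_eq_zero_or_pos_or_neg_of_hasDerivAt_mul isOpen_Ioo isPreconnected_Ioo
    ?_ hode⟩
  have hαc : ContinuousOn α (Ioo a b) := fun s hs => (hα s hs).continuousAt.continuousWithinAt
  have hθα : ContinuousOn (fun u => θ (α u)) (Ioo a b) := hθ.continuous.comp_continuousOn hαc
  exact ((hθ.continuous_fderiv two_ne_zero).comp_continuousOn hαc).clm_apply
    ((Real.continuous_sin.comp_continuousOn hθα).neg.prodMk
      (Real.continuous_cos.comp_continuousOn hθα))
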